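/- Let $\Sigma \in \mathbb{R}^{d\times d}$ be a symmetric PSD matrix with strictly positive diagonal $D$ satisfying $\min_i D_{ii} \ge (1-\epsilon)\max_i D_{ii}$ for some $\epsilon \in (0,1)$. Define the approximation error $\mathrm{err}(A,B) = \sup_{\lVert v \rVert_2 = 1} |v^\top A v - v^\top B v|$. Let $R_\circ = D^{-1/2}(\Sigma - D)D^{-1/2}$ with eigendecomposition $Q \Lambda Q^\top$ (eigenvalues in non-increasing order), and for $1 \le t \le d-1$ let $\Sigma^{\mathrm{ms}}_t = D + D^{1/2}[Q]_t[\Lambda]_t[Q]_t^\top D^{1/2}$ be the masked sketch of rank $t$, and let $\Sigma^{\mathrm{lr}}_t$ be the best rank-$t$ approximation of $\Sigma$ in operator norm. If the $(t+1)$-th eigenvalue of $D^{-1/2}\Sigma D^{-1/2}$ is at least $1$, then $\mathrm{err}(\Sigma, \Sigma^{\mathrm{ms}}_t) \le \mathrm{err}(\Sigma, \Sigma^{\mathrm{lr}}_t)/(1-\epsilon)$. -/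

import Mathlib

open Matrix

/-- Quadratic-form approximation error: `sup_{‖v‖₂ = 1} |vᵀ A v - vᵀ B v|`. -/
noncomputable def quadErr {d : ℕ} (A B : Matrix (Fin d) (Fin d) ℝ) : ℝ :=
  sSup {x : ℝ | ∃ v : Fin d → ℝ,
    (∑ i, v i ^ 2) = 1 ∧ x = |v ⬝ᵥ A.mulVec v - v ⬝ᵥ B.mulVec v|}

/-! Write `D = diag Σ` and `C = Qᵀ D^{1/2}`. Then `Σ = Cᵀ (1 + Λ) C`, the masked sketch is
`Cᵀ (1 + Λ_{<t}) C`, and `‖C v‖² = vᵀ D v` lies between `(1 - ε) max D ‖v‖²` and `max D ‖v‖²`.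
Positivity of `Σ` forces `Λ ≥ -1`, so every entry of the discarded tail `Λ_{≥t}` has size at
most `μ = 1 + Λ_t`, and the error of the sketch is at most `μ max D`. Conversely, the kernel of
a matrix `B` of rank `≤ t` meets the `(t+1)`-dimensional space `C⁻¹ span(e_0, …, e_t)`; on it
`vᵀ B v = 0` while `vᵀ Σ v ≥ μ ‖C v‖² ≥ μ (1 - ε) max D ‖v‖²`, so `err(Σ, B) ≥ μ (1 - ε) max D`. -/

open Module

namespace quadErr

variable {d : ℕ} {A B : Matrix (Fin d) (Fin d) ℝ}

lemma le_of_forall {c : ℝ} (hc : 0 ≤ c)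
    (h : ∀ v, |v ⬝ᵥ A *ᵥ v - v ⬝ᵥ B *ᵥ v| ≤ c * ∑ i, v i ^ 2) : quadErr A B ≤ c :=
  Real.sSup_le (fun _ ⟨v, hv, hx⟩ => hx ▸ by simpa [hv] using h v) hc

lemma bddAbove (A B : Matrix (Fin d) (Fin d) ℝ) :
    BddAbove {x : ℝ | ∃ v : Fin d → ℝ,
      (∑ i, v i ^ 2) = 1 ∧ x = |v ⬝ᵥ A *ᵥ v - v ⬝ᵥ B *ᵥ v|} := by
  have hsphere : IsCompact {v : Fin d → ℝ | ∑ i, v i ^ 2 = 1} := by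
    refine Metric.isCompact_of_isClosed_isBounded (isClosed_eq (by fun_prop) (by fun_prop)) ?_
    refine (Metric.isBounded_iff_subset_closedBall 0).2 ⟨1, fun v hv => ?_⟩
    refine mem_closedBall_zero_iff.2 ((pi_norm_le_iff_of_nonneg zero_le_one).2 fun i => ?_)
    rw [Real.norm_eq_abs, ← sq_le_one_iff_abs_le_one, ← hv.out]
    exact Finset.single_le_sum (fun j _ => sq_nonneg (v j)) (Finset.mem_univ i)
  refine (hsphere.bddAbove_image (f := fun v => |v ⬝ᵥ A *ᵥ v - v ⬝ᵥ B *ᵥ v|)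
    (by fun_prop)).mono ?_
  rintro _ ⟨v, hv, rfl⟩
  exact ⟨v, hv, rfl⟩

lemma abs_sub_le_mul (A B : Matrix (Fin d) (Fin d) ℝ) (v : Fin d → ℝ) :
    |v ⬝ᵥ A *ᵥ v - v ⬝ᵥ B *ᵥ v| ≤ quadErr A B * ∑ i, v i ^ 2 := by
  rcases (Finset.sum_nonneg fun i _ => sq_nonneg (v i)).eq_or_lt with h0 | hpos
  · have hv : v = 0 := funext fun i =>
      pow_eq_zero_iff two_ne_zero |>.1 <|
        (Finset.sum_eq_zero_iff_of_nonneg fun j _ => sq_nonneg (v j)).1 h0.symm i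
          (Finset.mem_univ i)
    simp [hv]
  set r := √(∑ i, v i ^ 2)
  have hr : 0 < r := Real.sqrt_pos.2 hpos
  have hr2 : r ^ 2 = ∑ i, v i ^ 2 := Real.sq_sqrt hpos.le
  have hunit : ∑ i, (r⁻¹ • v) i ^ 2 = 1 := by
    simp only [Pi.smul_apply, smul_eq_mul, mul_pow, ← Finset.mul_sum, ← hr2]
    field_simp
  have := le_csSup (bddAbove A B) ⟨r⁻¹ • v, hunit, rfl⟩
  simp only [mulVec_smul, dotProduct_smul, smul_dotProduct, smul_eq_mul, ← mul_sub,
    abs_mul, abs_inv, abs_of_pos hr] at this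
  rw [← hr2]
  calc _ = r ^ 2 * (r⁻¹ * (r⁻¹ * |v ⬝ᵥ A *ᵥ v - v ⬝ᵥ B *ᵥ v|)) := by field_simp
    _ ≤ r ^ 2 * quadErr A B := mul_le_mul_of_nonneg_left this (by positivity)
    _ = _ := mul_comm _ _

lemma le_of_mulVec_eq_zero {c : ℝ} {v : Fin d → ℝ} (hv : v ≠ 0) (hBv : B *ᵥ v = 0)
    (h : c * ∑ i, v i ^ 2 ≤ v ⬝ᵥ A *ᵥ v) : c ≤ quadErr A B := by
  have hpos : 0 < ∑ i, v i ^ 2 := by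
    obtain ⟨i, hi⟩ := Function.ne_iff.1 hv
    exact Finset.sum_pos' (fun j _ => sq_nonneg _)
      ⟨i, Finset.mem_univ i, pow_two_pos_of_ne_zero hi⟩
  refine le_of_mul_le_mul_right ?_ hpos
  calc c * ∑ i, v i ^ 2 ≤ |v ⬝ᵥ A *ᵥ v - v ⬝ᵥ B *ᵥ v| := by
        rw [hBv, dotProduct_zero, sub_zero]; exact h.trans (le_abs_self _)
    _ ≤ _ := abs_sub_le_mul A B v

end quadErr

section

variable {m n K : Type*} [Fintype n] [Field K]

lemma exists_mem_ne_zero_mulVec_eq_zero_of_rank_lt {A : Matrix m n K}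
    {W : Submodule K (n → K)} (h : A.rank < finrank K W) : ∃ w ∈ W, w ≠ 0 ∧ A *ᵥ w = 0 := by
  by_contra! hW
  have hinj : Function.Injective (A.mulVecLin.domRestrict W) :=
    (injective_iff_map_eq_zero _).2 fun w hw =>
      Subtype.ext (not_imp_not.1 (hW w w.2) hw)
  refine h.not_ge ?_
  calc finrank K W = finrank K (LinearMap.range (A.mulVecLin.domRestrict W)) :=
        (LinearMap.finrank_range_of_inj hinj).symm
    _ ≤ A.rank := Submodule.finrank_mono (LinearMap.range_domRestrict_le_range _ _)

lemma exists_ne_zero_mulVec_eq_zero_of_rank_le {d : ℕ} {A : Matrix m (Fin d) K} {k : Fin d}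
    (hA : A.rank ≤ k) : ∃ w ≠ 0, A *ᵥ w = 0 ∧ ∀ i, k < i → w i = 0 := by
  set W : Submodule K (Fin d → K) := ⨅ i ∈ Set.Ioi k, LinearMap.ker (LinearMap.proj i)
  have hW : finrank K W = k + 1 := by
    rw [(LinearMap.iInfKerProjEquiv K (fun _ => K) (Set.Iic_disjoint_Ioi le_rfl)
      Set.Iic_union_Ioi.ge).finrank_eq, Module.finrank_fintype_fun_eq_card, Fintype.card_Iic,
      Fin.card_Iic]
  obtain ⟨w, hwW, hw0, hAw⟩ :=
    exists_mem_ne_zero_mulVec_eq_zero_of_rank_lt (A := A) (W := W) (by omega)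
  refine ⟨w, hw0, hAw, fun i hi => ?_⟩
  simp only [W, Submodule.mem_iInf, LinearMap.mem_ker, LinearMap.proj_apply] at hwW
  exact hwW i hi

end

lemma mul_sum_sq_le_sum_mul_sq_of_antitone {ι : Type*} [Fintype ι] [LinearOrder ι]
    {a : ι → ℝ} (ha : Antitone a) {k : ι} {w : ι → ℝ} (hw : ∀ i, k < i → w i = 0) :
    a k * ∑ i, w i ^ 2 ≤ ∑ i, a i * w i ^ 2 := by
  rw [Finset.mul_sum]
  refine Finset.sum_le_sum fun i _ => ?_
  rcases le_or_gt i k with hik | hki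
  · exact mul_le_mul_of_nonneg_right (ha hik) (sq_nonneg _)
  · simp [hw i hki]

section

variable {m n : Type*} [Fintype m] [Fintype n] [DecidableEq m]

lemma dotProduct_mulVec_transpose_mul_diagonal_mul (C : Matrix m n ℝ) (a : m → ℝ)
    (v : n → ℝ) : v ⬝ᵥ (Cᵀ * diagonal a * C) *ᵥ v = ∑ i, a i * (C *ᵥ v) i ^ 2 := by
  rw [← mulVec_mulVec, ← mulVec_mulVec, dotProduct_mulVec, vecMul_transpose]
  simp only [dotProduct, mulVec_diagonal]
  exact Finset.sum_congr rfl fun i _ => by ring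

lemma abs_sub_dotProduct_mulVec_transpose_mul_diagonal_mul_le (C : Matrix m n ℝ)
    {a b : m → ℝ} {c : ℝ} (h : ∀ i, |a i - b i| ≤ c) (v : n → ℝ) :
    |v ⬝ᵥ (Cᵀ * diagonal a * C) *ᵥ v - v ⬝ᵥ (Cᵀ * diagonal b * C) *ᵥ v|
      ≤ c * ∑ i, (C *ᵥ v) i ^ 2 := by
  simp only [dotProduct_mulVec_transpose_mul_diagonal_mul, ← Finset.sum_sub_distrib,
    ← sub_mul, Finset.mul_sum]
  refine (Finset.abs_sum_le_sum_abs _ _).trans (Finset.sum_le_sum fun i _ => ?_)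
  rw [abs_mul, abs_of_nonneg (sq_nonneg ((C *ᵥ v) i))]
  exact mul_le_mul_of_nonneg_right (h i) (sq_nonneg _)

lemma nonneg_of_posSemidef_transpose_mul_diagonal_mul {C P : Matrix m m ℝ} (hCP : C * P = 1)
    {a : m → ℝ} (h : (Cᵀ * diagonal a * C).PosSemidef) (i : m) : 0 ≤ a i := by
  have := h.conjTranspose_mul_mul_same P
  rw [conjTranspose_eq_transpose_of_trivial,
    show Pᵀ * (Cᵀ * diagonal a * C) * P = (C * P)ᵀ * diagonal a * (C * P) by
      rw [transpose_mul]; noncomm_ring, hCP, transpose_one, one_mul, mul_one] at this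
  exact posSemidef_diagonal_iff.1 this i

lemma diagonal_mul_diagonal_inv {s : m → ℝ} (hs : ∀ i, s i ≠ 0) :
    diagonal s * diagonal s⁻¹ = 1 := by
  rw [diagonal_mul_diagonal, ← diagonal_one]
  exact congrArg diagonal (funext fun i => mul_inv_cancel₀ (hs i))

lemma diagonal_inv_mul_diagonal {s : m → ℝ} (hs : ∀ i, s i ≠ 0) :
    diagonal s⁻¹ * diagonal s = 1 := by
  rw [diagonal_mul_diagonal, ← diagonal_one]
  exact congrArg diagonal (funext fun i => inv_mul_cancel₀ (hs i))

lemma diagonal_mul_diagonal_inv_mul_mul_diagonal_inv_mul_diagonal {s : m → ℝ}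
    (hs : ∀ i, s i ≠ 0) (M : Matrix m m ℝ) :
    diagonal s * (diagonal s⁻¹ * M * diagonal s⁻¹) * diagonal s = M := by
  calc _ = (diagonal s * diagonal s⁻¹) * M * (diagonal s⁻¹ * diagonal s) := by noncomm_ring
    _ = M := by rw [diagonal_mul_diagonal_inv hs, diagonal_inv_mul_diagonal hs, one_mul, mul_one]

lemma diagonal_sq_add_diagonal_mul_mul_diagonal {Q : Matrix m m ℝ} (hQ : Q * Qᵀ = 1)
    (s a : m → ℝ) :
    diagonal (s ^ 2) + diagonal s * (Q * diagonal a * Qᵀ) * diagonal s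
      = (Qᵀ * diagonal s)ᵀ * diagonal (1 + a) * (Qᵀ * diagonal s) := by
  rw [transpose_mul, transpose_transpose, diagonal_transpose,
    show diagonal (1 + a) = 1 + diagonal a by rw [← diagonal_one, diagonal_add]; rfl,
    show diagonal (s ^ 2) = diagonal s * (Q * Qᵀ) * diagonal s by
      rw [hQ, mul_one, diagonal_mul_diagonal, sq]; rfl]
  noncomm_ring

lemma diagonal_sq_eq_transpose_mul {Q : Matrix m m ℝ} (hQ : Q * Qᵀ = 1) (s : m → ℝ) :
    diagonal (s ^ 2) = (Qᵀ * diagonal s)ᵀ * (Qᵀ * diagonal s) := by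
  rw [transpose_mul, transpose_transpose, diagonal_transpose,
    show diagonal (s ^ 2) = diagonal s * (Q * Qᵀ) * diagonal s by
      rw [hQ, mul_one, diagonal_mul_diagonal, sq]; rfl]
  noncomm_ring

lemma sum_sq_mulVec_transpose_mul_diagonal {Q : Matrix m m ℝ} (hQ : Q * Qᵀ = 1)
    (s v : m → ℝ) : ∑ i, ((Qᵀ * diagonal s) *ᵥ v) i ^ 2 = ∑ i, s i ^ 2 * v i ^ 2 := by
  have h := dotProduct_mulVec_transpose_mul_diagonal_mul (1 : Matrix m m ℝ) (s ^ 2) v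
  rw [transpose_one, one_mul, mul_one, one_mulVec, diagonal_sq_eq_transpose_mul hQ,
    ← mul_one (Qᵀ * diagonal s)ᵀ, ← diagonal_one,
    dotProduct_mulVec_transpose_mul_diagonal_mul] at h
  simpa using h

lemma eq_transpose_mul_diagonal_mul_of_diagonal_inv_mul_sub_mul_eq
    {S Q : Matrix m m ℝ} {s Λ : m → ℝ} (hs : ∀ i, s i ≠ 0) (hQ : Q * Qᵀ = 1)
    (h : diagonal s⁻¹ * (S - diagonal (s ^ 2)) * diagonal s⁻¹ = Q * diagonal Λ * Qᵀ) :
    S = (Qᵀ * diagonal s)ᵀ * diagonal (1 + Λ) * (Qᵀ * diagonal s) := by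
  rw [← diagonal_sq_add_diagonal_mul_mul_diagonal hQ, ← h,
    diagonal_mul_diagonal_inv_mul_mul_diagonal_inv_mul_diagonal hs, add_sub_cancel]

lemma transpose_mul_diagonal_mul_diagonal_inv_mul {Q : Matrix m m ℝ} (hQ : Qᵀ * Q = 1)
    {s : m → ℝ} (hs : ∀ i, s i ≠ 0) :
    Qᵀ * diagonal s * (diagonal s⁻¹ * Q) = 1 := by
  rw [Matrix.mul_assoc, ← Matrix.mul_assoc (diagonal s), diagonal_mul_diagonal_inv hs,
    Matrix.one_mul, hQ]

end

lemma exists_mulVec_eq_zero_mul_sum_sq_le {d : ℕ} {B C P : Matrix (Fin d) (Fin d) ℝ}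
    (hCP : C * P = 1) {a : Fin d → ℝ} (ha : Antitone a) {k : Fin d} (hB : B.rank ≤ k) :
    ∃ v ≠ 0, B *ᵥ v = 0 ∧
      a k * ∑ i, (C *ᵥ v) i ^ 2 ≤ v ⬝ᵥ (Cᵀ * diagonal a * C) *ᵥ v := by
  obtain ⟨w, hw0, hBw, hw⟩ :=
    exists_ne_zero_mulVec_eq_zero_of_rank_le ((rank_mul_le_left B P).trans hB)
  have hCw : C *ᵥ (P *ᵥ w) = w := by rw [mulVec_mulVec, hCP, one_mulVec]
  refine ⟨P *ᵥ w, fun h => hw0 (by rw [← hCw, h, mulVec_zero]), by rwa [mulVec_mulVec], ?_⟩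
  rw [dotProduct_mulVec_transpose_mul_diagonal_mul, hCw]
  exact mul_sum_sq_le_sum_mul_sq_of_antitone ha hw

lemma abs_sub_ite_lt_le {d : ℕ} {Λ : Fin d → ℝ} (hΛ : Antitone Λ) (hge : ∀ i, -1 ≤ Λ i)
    {t : ℕ} (htd : t < d) (ht : 0 ≤ Λ ⟨t, htd⟩) (i : Fin d) :
    |Λ i - if i.val < t then Λ i else 0| ≤ 1 + Λ ⟨t, htd⟩ := by
  split_ifs with h
  · rw [sub_self, abs_zero]; linarith
  · rw [sub_zero, abs_le]
    exact ⟨by linarith [hge i], by linarith [hΛ (show ⟨t, htd⟩ ≤ i from not_lt.1 h)]⟩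

lemma quadErr_transpose_mul_diagonal_mul_le {d : ℕ} (C : Matrix (Fin d) (Fin d) ℝ)
    {a b : Fin d → ℝ} {c M : ℝ} (hc : 0 ≤ c) (hab : ∀ i, |a i - b i| ≤ c) (hM : 0 ≤ M)
    (hC : ∀ v, ∑ i, (C *ᵥ v) i ^ 2 ≤ M * ∑ i, v i ^ 2) :
    quadErr (Cᵀ * diagonal a * C) (Cᵀ * diagonal b * C) ≤ c * M :=
  quadErr.le_of_forall (mul_nonneg hc hM) fun v =>
    (abs_sub_dotProduct_mulVec_transpose_mul_diagonal_mul_le C hab v).trans <| by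
      rw [mul_assoc]; exact mul_le_mul_of_nonneg_left (hC v) hc

lemma le_quadErr_transpose_mul_diagonal_mul_of_rank_le {d : ℕ}
    {B C P : Matrix (Fin d) (Fin d) ℝ} (hCP : C * P = 1) {a : Fin d → ℝ} (ha : Antitone a)
    {k : Fin d} (hak : 0 ≤ a k) (hB : B.rank ≤ k) {m : ℝ}
    (hC : ∀ v, m * ∑ i, v i ^ 2 ≤ ∑ i, (C *ᵥ v) i ^ 2) :
    a k * m ≤ quadErr (Cᵀ * diagonal a * C) B := by
  obtain ⟨v, hv0, hBv, hv⟩ := exists_mulVec_eq_zero_mul_sum_sq_le hCP ha hB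
  refine quadErr.le_of_mulVec_eq_zero hv0 hBv (le_trans ?_ hv)
  rw [mul_assoc]
  exact mul_le_mul_of_nonneg_left (hC v) hak

theorem stmt_8_general {d : ℕ} (Sig : Matrix (Fin d) (Fin d) ℝ) (hSig : Sig.PosSemidef)
    (hdiag : ∀ i, 0 < Sig i i)
    (ε : ℝ) (hε : ε ∈ Set.Ioo (0 : ℝ) 1)
    (hunif : ∀ i j, (1 - ε) * Sig j j ≤ Sig i i)
    -- diagonal `D`, its square root, and inverse square root
    (D Dhalf Dinvhalf : Matrix (Fin d) (Fin d) ℝ)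
    (hD : D = Matrix.diagonal (fun i => Sig i i))
    (hDhalf : Dhalf = Matrix.diagonal (fun i => Real.sqrt (Sig i i)))
    (hDinvhalf : Dinvhalf = Matrix.diagonal (fun i => (Real.sqrt (Sig i i))⁻¹))
    -- eigendecomposition of the normalized residual `R∘ = D^{-1/2}(Σ - D)D^{-1/2}`
    (Q : Matrix (Fin d) (Fin d) ℝ) (Λ : Fin d → ℝ)
    (hQ1 : Q * Qᵀ = 1) (hQ2 : Qᵀ * Q = 1) (hΛsort : Antitone Λ)
    (hdecomp : Dinvhalf * (Sig - D) * Dinvhalf = Q * Matrix.diagonal Λ * Qᵀ)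
    (t : ℕ) (htd : t < d)
    -- the `(t+1)`-th eigenvalue of `D^{-1/2} Σ D^{-1/2}` is at least `1`
    (heig : 1 ≤ 1 + Λ ⟨t, htd⟩)
    -- the masked sketch of rank `t`
    (Sigs : Matrix (Fin d) (Fin d) ℝ)
    (hSigs : Sigs = D + Dhalf *
      (Q * Matrix.diagonal (fun i => if i.val < t then Λ i else 0) * Qᵀ) * Dhalf) :
    -- the masked sketch is within `1/(1-ε)` of any rank-`t` approximation,
    -- in particular of the optimal one `Σ^lr_t`
    ∀ B : Matrix (Fin d) (Fin d) ℝ, B.rank ≤ t →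
      quadErr Sig Sigs ≤ quadErr Sig B / (1 - ε) := by
  intro B hB
  subst hD hDhalf hDinvhalf
  set s : Fin d → ℝ := fun i => √(Sig i i)
  have hs : ∀ i, s i ≠ 0 := fun i => (Real.sqrt_pos.2 (hdiag i)).ne'
  have hs2 : diagonal (fun i => Sig i i) = diagonal (s ^ 2) :=
    congrArg diagonal (funext fun i => (Real.sq_sqrt (hdiag i).le).symm)
  have hCv : ∀ v, ∑ i, ((Qᵀ * diagonal s) *ᵥ v) i ^ 2 = ∑ i, Sig i i * v i ^ 2 := fun v => by
    simp only [sum_sq_mulVec_transpose_mul_diagonal hQ1, s, Real.sq_sqrt (hdiag _).le]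
  have hCP := transpose_mul_diagonal_mul_diagonal_inv_mul hQ2 hs
  rw [hs2] at hdecomp hSigs
  rw [eq_transpose_mul_diagonal_mul_of_diagonal_inv_mul_sub_mul_eq hs hQ1 hdecomp] at hSig ⊢
  rw [diagonal_sq_add_diagonal_mul_mul_diagonal hQ1] at hSigs
  have hΛ (i : Fin d) : -1 ≤ Λ i := by
    have := nonneg_of_posSemidef_transpose_mul_diagonal_mul hCP hSig i
    simp only [Pi.add_apply, Pi.one_apply] at this
    linarith
  have : Nonempty (Fin d) := ⟨⟨t, htd⟩⟩
  obtain ⟨i₀, hi₀⟩ := Finite.exists_max fun i => Sig i i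
  have hub := quadErr_transpose_mul_diagonal_mul_le (Qᵀ * diagonal s) (a := 1 + Λ)
    (b := 1 + fun i => if i.val < t then Λ i else 0) (c := 1 + Λ ⟨t, htd⟩) (by linarith)
    (fun i => by simpa using abs_sub_ite_lt_le hΛsort hΛ htd (by linarith) i) (hdiag i₀).le
    fun v => by rw [hCv, Finset.mul_sum]; gcongr with i; exact hi₀ i
  have hlb := le_quadErr_transpose_mul_diagonal_mul_of_rank_le hCP (a := 1 + Λ)
    (fun i j hij => add_le_add_right (hΛsort hij) 1) (k := ⟨t, htd⟩)
    (show 0 ≤ 1 + Λ _ by linarith) hB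
    fun v => by rw [hCv, Finset.mul_sum]; gcongr with i; exact hunif i i₀
  rw [← hSigs] at hub
  simp only [Pi.add_apply, Pi.one_apply] at hlb
  rw [le_div_iff₀ (sub_pos.2 hε.2)]
  linarith [mul_le_mul_of_nonneg_right hub (sub_pos.2 hε.2).le]

theorem stmt_8 {d : ℕ} (Sig : Matrix (Fin d) (Fin d) ℝ) (hSig : Sig.PosSemidef)
    (hdiag : ∀ i, 0 < Sig i i)
    (ε : ℝ) (hε : ε ∈ Set.Ioo (0 : ℝ) 1)
    (hunif : ∀ i j, (1 - ε) * Sig j j ≤ Sig i i)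
    -- diagonal `D`, its square root, and inverse square root
    (D Dhalf Dinvhalf : Matrix (Fin d) (Fin d) ℝ)
    (hD : D = Matrix.diagonal (fun i => Sig i i))
    (hDhalf : Dhalf = Matrix.diagonal (fun i => Real.sqrt (Sig i i)))
    (hDinvhalf : Dinvhalf = Matrix.diagonal (fun i => (Real.sqrt (Sig i i))⁻¹))
    -- eigendecomposition of the normalized residual `R∘ = D^{-1/2}(Σ - D)D^{-1/2}`
    (Q : Matrix (Fin d) (Fin d) ℝ) (Λ : Fin d → ℝ)
    (hQ1 : Q * Qᵀ = 1) (hQ2 : Qᵀ * Q = 1) (hΛsort : Antitone Λ)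
    (hdecomp : Dinvhalf * (Sig - D) * Dinvhalf = Q * Matrix.diagonal Λ * Qᵀ)
    (t : ℕ) (ht1 : 1 ≤ t) (htd : t < d)
    -- the `(t+1)`-th eigenvalue of `D^{-1/2} Σ D^{-1/2}` is at least `1`
    (heig : 1 ≤ 1 + Λ ⟨t, htd⟩)
    -- the masked sketch of rank `t`
    (Sigs : Matrix (Fin d) (Fin d) ℝ)
    (hSigs : Sigs = D + Dhalf *
      (Q * Matrix.diagonal (fun i => if i.val < t then Λ i else 0) * Qᵀ) * Dhalf) :
    -- the masked sketch is within `1/(1-ε)` of any rank-`t` approximation,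
    -- in particular of the optimal one `Σ^lr_t`
    ∀ B : Matrix (Fin d) (Fin d) ℝ, B.rank ≤ t →
      quadErr Sig Sigs ≤ quadErr Sig B / (1 - ε) :=
  stmt_8_general Sig hSig hdiag ε hε hunif D Dhalf Dinvhalf hD hDhalf hDinvhalf Q Λ hQ1 hQ2 hΛsort
    hdecomp t htd heig Sigs hSigs
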